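/- arXiv:2506.02564 — 2 statements merged into one kernel-verified Lean document; each statement's English description precedes it below -/
import Mathlib

section
/- Let $A\subset\mathbb{R}^p$ be convex, $H:A\to\mathbb{R}$ differentiable and satisfying $H(a)-H(a')\ge\nabla H(a')\cdot(a-a')$ for all $a,a'\in A$ (i.e. convexity along the gradient inequality with $\lambda=0$). Let $\psi^*$ be convex $C^2$ with $\nabla\psi^*(\mathbb{R}^p)\subseteq A$, let $a^*=\nabla\psi^*(Z^*)$ be a minimizer of $H$ over $A$, and let $Z$ solve $\frac{d}{ds}Z_s=-\nabla H(\nabla\psi^*(Z_s))$. Then for all $S>0$, $S\,(H(a_S)-H(a^*))\le D_{\psi^*}(Z_0,Z^*)$, where $a_S=\nabla\psi^*(Z_S)$ and $D_{\psi^*}(Z,Z')=\psi^*(Z)-\psi^*(Z')-\nabla\psi^*(Z')\cdot(Z-Z')$ is the Bregman divergence. -/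
open scoped RealInnerProductSpace
open InnerProductSpace Set

section Aux

variable {E : Type*} [NormedAddCommGroup E] [InnerProductSpace ℝ E] [CompleteSpace E]

lemma fderiv_apply_eq_inner_gradient' {f : E → ℝ} {x : E} (hd : DifferentiableAt ℝ f x) (w : E) :
    fderiv ℝ f x w = ⟪gradient f x, w⟫ := by
  rw [hd.hasGradientAt.hasFDerivAt.fderiv]
  exact toDual_apply_apply

lemma grad_ineq' {f : E → ℝ} (hconv : ConvexOn ℝ Set.univ f) (hd : Differentiable ℝ f)
    (x y : E) : ⟪gradient f x, y - x⟫ ≤ f y - f x := by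
  have hline : ∀ t : ℝ, HasDerivAt (fun t : ℝ => x + t • (y - x)) (y - x) t := by
    intro t
    simpa using ((hasDerivAt_id t).smul_const (y - x)).const_add x
  have hgd : ∀ t : ℝ, HasDerivAt (fun t : ℝ => f (x + t • (y - x)))
      (fderiv ℝ f (x + t • (y - x)) (y - x)) t := fun t =>
    (hd _).hasFDerivAt.comp_hasDerivAt t (hline t)
  have hgc : ConvexOn ℝ Set.univ (fun t : ℝ => f (x + t • (y - x))) := by
    have h := hconv.comp_affineMap (AffineMap.lineMap x y : ℝ →ᵃ[ℝ] E)
    simp only [Set.preimage_univ] at h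
    have hfun : (fun t : ℝ => f (x + t • (y - x))) = f ∘ (AffineMap.lineMap x y : ℝ →ᵃ[ℝ] E) := by
      funext t
      simp [AffineMap.lineMap_apply, add_comm]
    rw [hfun]
    exact h
  have hs := hgc.le_slope_of_hasDerivAt (Set.mem_univ (0:ℝ)) (Set.mem_univ (1:ℝ))
    zero_lt_one (hgd 0)
  have e0 : x + (0:ℝ) • (y - x) = x := by simp
  have e1 : x + (1:ℝ) • (y - x) = y := by simp
  rw [slope_def_field] at hs
  simp only [e0, e1] at hs
  calc ⟪gradient f x, y - x⟫ = fderiv ℝ f x (y - x) :=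
        (fderiv_apply_eq_inner_gradient' (hd x) _).symm
    _ ≤ (f y - f x) / (1 - 0) := hs
    _ = f y - f x := by norm_num

lemma grad_mono' {f : E → ℝ} (hconv : ConvexOn ℝ Set.univ f) (hd : Differentiable ℝ f)
    (x y : E) : 0 ≤ ⟪gradient f y - gradient f x, y - x⟫ := by
  have h1 := grad_ineq' hconv hd x y
  have h2 := grad_ineq' hconv hd y x
  have : ⟪gradient f y, x - y⟫ = -⟪gradient f y, y - x⟫ := by
    rw [← inner_neg_right]; congr 1; abel
  rw [inner_sub_left]
  linarith [h1, h2, this ▸ h2]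

lemma gradient_contDiff' {f : E → ℝ} (hf : ContDiff ℝ 2 f) :
    ContDiff ℝ 1 (gradient f) := by
  have h1 : ContDiff ℝ 1 (fderiv ℝ f) := hf.fderiv_right (by norm_num)
  exact (toDual ℝ E).symm.contDiff.comp h1

lemma hessian_psd' {f : E → ℝ} (hconv : ConvexOn ℝ Set.univ f) (hf : ContDiff ℝ 2 f)
    (x v : E) : 0 ≤ ⟪fderiv ℝ (gradient f) x v, v⟫ := by
  have hd : Differentiable ℝ f := hf.differentiable (by norm_num)
  have hGd : Differentiable ℝ (gradient f) :=
    (gradient_contDiff' hf).differentiable one_ne_zero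
  set φ : ℝ → ℝ := fun t => ⟪v, gradient f (x + t • v) - gradient f x⟫ with hφ
  have hline : ∀ t : ℝ, HasDerivAt (fun t : ℝ => x + t • v) v t := by
    intro t
    simpa using ((hasDerivAt_id t).smul_const v).const_add x
  have hDφ : HasDerivAt φ ⟪fderiv ℝ (gradient f) x v, v⟫ 0 := by
    have h1 : HasDerivAt (fun t : ℝ => gradient f (x + t • v))
        (fderiv ℝ (gradient f) (x + (0:ℝ) • v) v) 0 :=
      (hGd _).hasFDerivAt.comp_hasDerivAt 0 (hline 0)
    simp only [zero_smul, add_zero] at h1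
    have h2 : HasDerivAt (fun t : ℝ => gradient f (x + t • v) - gradient f x)
        (fderiv ℝ (gradient f) x v) 0 := h1.sub_const _
    have h3 := ((innerSL ℝ (E := E)) v).hasFDerivAt.comp_hasDerivAt 0 h2
    rw [real_inner_comm]
    simpa [Function.comp_def, hφ] using h3
  have hslope : ∀ t : ℝ, t ≠ 0 → 0 ≤ slope φ 0 t := by
    intro t ht
    have hm := grad_mono' hconv hd x (x + t • v)
    have : x + t • v - x = t • v := by abel
    rw [this, real_inner_smul_right] at hm
    have hphi0 : φ 0 = 0 := by simp [hφ]
    have hφt : slope φ 0 t = φ t / t := by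
      rw [slope_def_field, hphi0, sub_zero, sub_zero]
    have hinner : φ t = ⟪gradient f (x + t • v) - gradient f x, v⟫ := by
      rw [hφ]; exact real_inner_comm _ _
    rw [hφt]
    rcases lt_or_gt_of_ne ht with h | h
    · exact div_nonneg_iff.mpr (Or.inr ⟨by nlinarith, h.le⟩)
    · exact div_nonneg (by nlinarith) h.le
  have htend := hasDerivAt_iff_tendsto_slope.mp hDφ
  refine ge_of_tendsto htend ?_
  filter_upwards [self_mem_nhdsWithin] with t ht
  exact hslope t ht

end Aux

/-- Linear-rate convergence of continuous-time mirror descent for a convex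
objective: `S (H(a_S) - H(a*)) ≤ D_{ψ*}(Z_0, Z*)`. -/
theorem mirror_descent_linear_rate {p : ℕ}
    (A : Set (EuclideanSpace ℝ (Fin p))) (hA : Convex ℝ A)
    (H ψs : EuclideanSpace ℝ (Fin p) → ℝ)
    (hH : Differentiable ℝ H)
    (hconvH : ∀ a ∈ A, ∀ a' ∈ A, H a - H a' ≥ ⟪gradient H a', a - a'⟫)
    (hψconv : ConvexOn ℝ Set.univ ψs)
    (hψC2 : ContDiff ℝ 2 ψs)
    (hrange : Set.range (gradient ψs) ⊆ A)
    (Zstar : EuclideanSpace ℝ (Fin p))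
    (hmin : ∀ a ∈ A, H (gradient ψs Zstar) ≤ H a)
    (Z : ℝ → EuclideanSpace ℝ (Fin p))
    (hODE : ∀ s, HasDerivAt Z (-(gradient H (gradient ψs (Z s)))) s)
    (S : ℝ) (hS : 0 < S) :
    S * (H (gradient ψs (Z S)) - H (gradient ψs Zstar)) ≤
      ψs (Z 0) - ψs Zstar - ⟪gradient ψs Zstar, Z 0 - Zstar⟫ := by
  have hψd : Differentiable ℝ ψs := hψC2.differentiable (by norm_num)
  have hGd : Differentiable ℝ (gradient ψs) :=
    (gradient_contDiff' hψC2).differentiable one_ne_zero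
  set a : ℝ → EuclideanSpace ℝ (Fin p) := fun s => gradient ψs (Z s) with ha
  set astar : EuclideanSpace ℝ (Fin p) := gradient ψs Zstar with hastar
  have hmemA : ∀ s, a s ∈ A := fun s => hrange ⟨Z s, rfl⟩
  have hstarA : astar ∈ A := hrange ⟨Zstar, rfl⟩
  -- derivative of a
  have hDa : ∀ s, HasDerivAt a (fderiv ℝ (gradient ψs) (Z s) (-(gradient H (a s)))) s :=
    fun s => (hGd (Z s)).hasFDerivAt.comp_hasDerivAt s (hODE s)
  -- H ∘ a is antitone
  have hDh : ∀ s, HasDerivAt (fun s => H (a s))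
      (fderiv ℝ H (a s) (fderiv ℝ (gradient ψs) (Z s) (-(gradient H (a s))))) s :=
    fun s => (hH (a s)).hasFDerivAt.comp_hasDerivAt s (hDa s)
  have hDh_nonpos : ∀ s,
      fderiv ℝ H (a s) (fderiv ℝ (gradient ψs) (Z s) (-(gradient H (a s)))) ≤ 0 := by
    intro s
    rw [fderiv_apply_eq_inner_gradient' (hH (a s)), map_neg, inner_neg_right]
    have hpsd := hessian_psd' hψconv hψC2 (Z s) (gradient H (a s))
    rw [real_inner_comm] at hpsd
    linarith
  have hanti : AntitoneOn (fun s => H (a s)) (Set.Icc 0 S) := by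
    apply antitoneOn_of_deriv_nonpos (convex_Icc 0 S)
    · exact fun s _ => ((hDh s).continuousAt).continuousWithinAt
    · exact fun s _ => ((hDh s).differentiableAt).differentiableWithinAt
    · intro s _
      rw [(hDh s).deriv]
      exact hDh_nonpos s
  -- the Lyapunov-type function W
  set c : ℝ := H (a S) - H astar with hc
  set W : ℝ → ℝ := fun s => ψs (Z s) - ψs Zstar - ⟪astar, Z s - Zstar⟫ + s * c with hW
  have hDW : ∀ s, HasDerivAt W
      (⟪a s, -(gradient H (a s))⟫ - ⟪astar, -(gradient H (a s))⟫ + c) s := by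
    intro s
    have h1 : HasDerivAt (fun s => ψs (Z s)) (fderiv ℝ ψs (Z s) (-(gradient H (a s)))) s :=
      (hψd (Z s)).hasFDerivAt.comp_hasDerivAt s (hODE s)
    rw [fderiv_apply_eq_inner_gradient' (hψd (Z s))] at h1
    have h2 : HasDerivAt (fun s => ⟪astar, Z s - Zstar⟫) (⟪astar, -(gradient H (a s))⟫) s := by
      have h3 := ((innerSL ℝ (E := EuclideanSpace ℝ (Fin p))) astar).hasFDerivAt.comp_hasDerivAt
        s ((hODE s).sub_const Zstar)
      simpa [Function.comp_def] using h3
    have h4 : HasDerivAt (fun s : ℝ => s * c) c s := by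
      simpa using (hasDerivAt_id s).mul_const c
    exact ((h1.sub_const (ψs Zstar)).sub h2).add h4
  have hW'nonpos : ∀ s ∈ Set.Ioo 0 S,
      (⟪a s, -(gradient H (a s))⟫ - ⟪astar, -(gradient H (a s))⟫ + c) ≤ 0 := by
    intro s hs
    have hconv := hconvH astar hstarA (a s) (hmemA s)
    have hmono := hanti (Set.mem_Icc.mpr ⟨hs.1.le, hs.2.le⟩)
      (Set.mem_Icc.mpr ⟨hS.le, le_rfl⟩) hs.2.le
    have heq : ⟪a s, -(gradient H (a s))⟫ - ⟪astar, -(gradient H (a s))⟫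
        = ⟪gradient H (a s), astar - a s⟫ := by
      simp only [inner_neg_right, inner_sub_right]
      rw [real_inner_comm (a s), real_inner_comm astar]
      ring
    rw [heq]
    simp only [hc]
    linarith
  have hWanti : AntitoneOn W (Set.Icc 0 S) := by
    apply antitoneOn_of_deriv_nonpos (convex_Icc 0 S)
    · exact fun s _ => ((hDW s).continuousAt).continuousWithinAt
    · exact fun s _ => ((hDW s).differentiableAt).differentiableWithinAt
    · intro s hs
      rw [interior_Icc] at hs
      rw [(hDW s).deriv]
      exact hW'nonpos s hs
  have hWS : W S ≤ W 0 := hWanti (Set.mem_Icc.mpr ⟨le_rfl, hS.le⟩)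
    (Set.mem_Icc.mpr ⟨hS.le, le_rfl⟩) hS.le
  have hbreg : ⟪astar, Z S - Zstar⟫ ≤ ψs (Z S) - ψs Zstar :=
    grad_ineq' hψconv hψd Zstar (Z S)
  simp only [hW, hc] at hWS
  have : S * (H (a S) - H astar) ≤ ψs (Z 0) - ψs Zstar - ⟪astar, Z 0 - Zstar⟫ := by
    nlinarith [hWS, hbreg]
  simpa using this
end

section
/- Let $\psi:\mathbb{R}^p\to\mathbb{R}\cup\{+\infty\}$ be convex with Legendre conjugate $\psi^*$, and suppose $D_{\psi^*}(y,y')=D_{\psi}(\nabla\psi^*(y'),\nabla\psi^*(y))$ for all $y,y'$. Assume $H$ is differentiable on the convex set $A=\nabla\psi^*(\mathbb{R}^p)$ and satisfies the relative strong convexity inequality $H(a)-H(a')\ge\nabla H(a')\cdot(a-a')+\frac{\lambda}{2}D_\psi(a,a')$ with $\lambda>0$. If $Z$ solves the continuous-time mirror descent ODE $\frac{d}{ds}Z_s=-\nabla H(\nabla\psi^*(Z_s))$ and $Z^*$ satisfies $\nabla\psi^*(Z^*)=a^*\in\arg\min_A H$, then $D_{\psi^*}(Z_S,Z^*)\le e^{-\lambda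 S/2}D_{\psi^*}(Z_0,Z^*)$ for all $S\ge0$. -/
open scoped RealInnerProductSpace

/-- Exponential convergence of continuous-time mirror descent under relative
strong convexity: `D_{ψ*}(Z_S, Z*) ≤ exp(-λ S / 2) D_{ψ*}(Z_0, Z*)`. -/
theorem mirror_descent_exponential_rate {p : ℕ}
    (ψ ψs H : EuclideanSpace ℝ (Fin p) → ℝ)
    (hψconv : ConvexOn ℝ Set.univ ψ)
    (hψ : Differentiable ℝ ψ)
    -- ψ* is the Legendre conjugate of ψ
    (hconj : ∀ y, ψs y = sSup ((fun a => ⟪a, y⟫ - ψ a) '' Set.univ))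
    (hψs : Differentiable ℝ ψs)
    -- compatibility of the Bregman divergences: D_{ψ*}(y,y') = D_ψ(∇ψ*(y'),∇ψ*(y))
    (hD : ∀ y y', ψs y - ψs y' - ⟪gradient ψs y', y - y'⟫ =
      ψ (gradient ψs y') - ψ (gradient ψs y) -
        ⟪gradient ψ (gradient ψs y), gradient ψs y' - gradient ψs y⟫)
    (A : Set (EuclideanSpace ℝ (Fin p)))
    (hA : A = Set.range (gradient ψs)) (hAconv : Convex ℝ A)
    (hH : Differentiable ℝ H)
    (lam : ℝ) (hlam : 0 < lam)
    -- relative strong convexity of H with respect to ψ on A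
    (hstrong : ∀ a ∈ A, ∀ a' ∈ A, H a - H a' ≥
      ⟪gradient H a', a - a'⟫ + lam / 2 * (ψ a - ψ a' - ⟪gradient ψ a', a - a'⟫))
    (Zstar : EuclideanSpace ℝ (Fin p))
    (hmin : ∀ a ∈ A, H (gradient ψs Zstar) ≤ H a)
    (Z : ℝ → EuclideanSpace ℝ (Fin p))
    (hODE : ∀ s, HasDerivAt Z (-(gradient H (gradient ψs (Z s)))) s)
    (S : ℝ) (hS : 0 ≤ S) :
    ψs (Z S) - ψs Zstar - ⟪gradient ψs Zstar, Z S - Zstar⟫ ≤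
      Real.exp (-lam * S / 2) *
        (ψs (Z 0) - ψs Zstar - ⟪gradient ψs Zstar, Z 0 - Zstar⟫) := by
  set astar := gradient ψs Zstar with hastar
  set V : ℝ → ℝ := fun s => ψs (Z s) - ψs Zstar - ⟪astar, Z s - Zstar⟫ with hVdef
  -- derivative of V
  have hVderiv : ∀ s, HasDerivAt V
      (⟪gradient H (gradient ψs (Z s)), astar - gradient ψs (Z s)⟫) s := by
    intro s
    have h1 : HasDerivAt (fun t => ψs (Z t))
        (⟪gradient ψs (Z s), -(gradient H (gradient ψs (Z s)))⟫) s := by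
      have := ((hψs (Z s)).hasGradientAt.hasFDerivAt).comp_hasDerivAt s (hODE s)
      simpa only [Function.comp_def, InnerProductSpace.toDual_apply_apply] using this
    have h2 : HasDerivAt (fun t => (⟪astar, Z t - Zstar⟫ : ℝ))
        (⟪astar, -(gradient H (gradient ψs (Z s)))⟫) s := by
      have hc : HasDerivAt (fun _ : ℝ => astar) 0 s := hasDerivAt_const s astar
      have hz : HasDerivAt (fun t => Z t - Zstar)
          (-(gradient H (gradient ψs (Z s)))) s := (hODE s).sub_const Zstar
      have := hc.inner ℝ hz
      simpa using this
    have h3 := (h1.sub_const (ψs Zstar)).sub h2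
    have heq : ⟪gradient ψs (Z s), -(gradient H (gradient ψs (Z s)))⟫ -
        ⟪astar, -(gradient H (gradient ψs (Z s)))⟫ =
        ⟪gradient H (gradient ψs (Z s)), astar - gradient ψs (Z s)⟫ := by
      simp only [inner_neg_right, inner_sub_right]
      rw [real_inner_comm (gradient H (gradient ψs (Z s))) astar,
        real_inner_comm (gradient H (gradient ψs (Z s))) (gradient ψs (Z s))]
      ring
    rw [heq] at h3
    exact h3
  -- key inequality: derivative ≤ -(lam/2) V
  have hkey : ∀ s, ⟪gradient H (gradient ψs (Z s)), astar - gradient ψs (Z s)⟫ ≤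
      -(lam / 2) * V s := by
    intro s
    have hasA : astar ∈ A := by rw [hA]; exact ⟨Zstar, rfl⟩
    have hsA : gradient ψs (Z s) ∈ A := by rw [hA]; exact ⟨Z s, rfl⟩
    have hstr := hstrong astar hasA (gradient ψs (Z s)) hsA
    have hm := hmin (gradient ψs (Z s)) hsA
    have hDs := hD (Z s) Zstar
    have hVs : V s = ψ astar - ψ (gradient ψs (Z s)) -
        ⟪gradient ψ (gradient ψs (Z s)), astar - gradient ψs (Z s)⟫ := hDs
    rw [hVs]
    nlinarith [hstr, hm]
  -- Grönwall
  set g : ℝ → ℝ := fun s => Real.exp (lam / 2 * s) * V s with hgdef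
  have hgderiv : ∀ s, HasDerivAt g
      (lam / 2 * Real.exp (lam / 2 * s) * V s +
        Real.exp (lam / 2 * s) * ⟪gradient H (gradient ψs (Z s)), astar - gradient ψs (Z s)⟫) s := by
    intro s
    have he : HasDerivAt (fun t => Real.exp (lam / 2 * t)) (Real.exp (lam / 2 * s) * (lam / 2)) s := by
      have := ((hasDerivAt_id s).const_mul (lam / 2)).exp
      simpa using this
    have := he.mul (hVderiv s)
    exact this.congr_deriv (by ring)
  have hgmono : Antitone g := by
    apply antitone_of_deriv_nonpos
    · exact fun s => (hgderiv s).differentiableAt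
    · intro s
      rw [(hgderiv s).deriv]
      have := hkey s
      have hexp : (0:ℝ) < Real.exp (lam / 2 * s) := Real.exp_pos _
      nlinarith
  have hg := hgmono hS
  have hexpS : (0:ℝ) < Real.exp (lam / 2 * S) := Real.exp_pos _
  have hVS : V S ≤ Real.exp (-lam * S / 2) * V 0 := by
    have : Real.exp (lam / 2 * S) * V S ≤ Real.exp (lam / 2 * 0) * V 0 := hg
    rw [mul_zero, Real.exp_zero, one_mul] at this
    have h2 : V S ≤ V 0 / Real.exp (lam / 2 * S) := by
      rw [le_div_iff₀ hexpS]; linarith [this]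
    calc V S ≤ V 0 / Real.exp (lam / 2 * S) := h2
      _ = Real.exp (-lam * S / 2) * V 0 := by
          rw [div_eq_mul_inv, ← Real.exp_neg, mul_comm]
          ring_nf
  simpa [hVdef] using hVS
end
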